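/- Let d ≥ 2, 1 + 4/d < p < (d+2)/(d-2)^+, ω ∈ R, and suppose u ∈ H^1(R^d) is a nontrivial (weak) solution of Δu + |u|^{4/d} u − |u|^{p-1} u − ω u = 0 which satisfies the two Pohozaev-type identities ∫[(2d/(p+1)+2−d)|∇u|² + (d/(1+2/d) − 2d/(p+1))|u|^{2+4/d} + (2d/(p+1) − d)ω|u|²] dx = 0 and 2∫|∇u|² − (2d/(d+2))∫|u|^{2+4/d} + ((p−1)d/(p+1))∫|u|^{p+1} = 0. Then ω > 0. -/

import Mathlib

open MeasureTheory

/-- The (pointwise) Laplacian of a function on `ℝ^d`, as the trace of the second derivative. -/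
noncomputable def lapC {d : ℕ} (f : EuclideanSpace ℝ (Fin d) → ℂ)
    (x : EuclideanSpace ℝ (Fin d)) : ℂ :=
  ∑ i : Fin d, iteratedFDeriv ℝ 2 f x ![EuclideanSpace.single i 1, EuclideanSpace.single i 1]

/-! The first Pohozaev identity reads `a K + b B = -c ω M` with `K = ‖∇u‖₂²`, `B = ‖u‖_{2+4/d}^{2+4/d}`
and `M = ‖u‖₂²`. In the range `1 + 4/d < p < (d+2)/(d-2)` the coefficients satisfy `a > 0`,
`b > 0` and `c < 0`, and `B > 0` for nontrivial `u`, so `ω M > 0` and hence `ω > 0`. -/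

section PohozaevCoefficients

variable {d p : ℝ}

lemma mul_sub_two_lt_add_two (hd : 2 ≤ d) (hp : d = 2 ∨ p < (d + 2) / (d - 2)) :
    p * (d - 2) < d + 2 := by
  rcases hp with rfl | hp
  · norm_num
  · rcases hd.eq_or_lt with rfl | hd
    · norm_num
    · exact (lt_div_iff₀ (by linarith)).mp hp

lemma gradient_coeff_pos (hp : -1 < p) (hsub : p * (d - 2) < d + 2) :
    0 < 2 * d / (p + 1) + 2 - d := by
  have : d - 2 < 2 * d / (p + 1) := by
    rw [lt_div_iff₀ (by linarith)]
    nlinarith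
  linarith

lemma mass_critical_coeff_pos (hd : 0 < d) (hp : 1 + 4 / d < p) :
    0 < d / (1 + 2 / d) - 2 * d / (p + 1) := by
  have hpd : d + 4 < p * d := by
    have := (div_lt_iff₀ hd).mp (show 4 / d < p - 1 by linarith)
    nlinarith
  have hp1 : 0 < p + 1 := by linarith [div_pos four_pos hd]
  have he : d / (1 + 2 / d) = d ^ 2 / (d + 2) := by
    field_simp
  rw [he, sub_pos, div_lt_div_iff₀ hp1 (by linarith)]
  nlinarith

lemma mass_coeff_neg (hd : 0 < d) (hp : 1 < p) : 2 * d / (p + 1) - d < 0 := by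
  rw [sub_neg, div_lt_iff₀ (by linarith)]
  nlinarith

end PohozaevCoefficients

lemma pos_of_pohozaev_identity {a b c K B M ω : ℝ} (ha : 0 ≤ a) (hb : 0 < b) (hc : c < 0)
    (hK : 0 ≤ K) (hB : 0 < B) (hM : 0 ≤ M) (h : a * K + b * B + c * ω * M = 0) : 0 < ω := by
  by_contra! hω
  nlinarith [mul_nonneg ha hK, mul_pos hb hB, mul_nonneg (mul_nonneg_of_nonpos_of_nonpos hc.le hω) hM]

lemma integral_norm_rpow_pos {α E : Type*} [MeasurableSpace α] {μ : Measure α}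
    [NormedAddCommGroup E] {f : α → E} {q : ℝ} (hq : 0 < q)
    (hi : Integrable (fun x => ‖f x‖ ^ q) μ) (hf : ¬ f =ᵐ[μ] 0) :
    0 < ∫ x, ‖f x‖ ^ q ∂μ := by
  refine (integral_nonneg fun x => Real.rpow_nonneg (norm_nonneg _) _).lt_of_ne fun h => hf ?_
  filter_upwards [(integral_eq_zero_iff_of_nonneg
    (fun x => Real.rpow_nonneg (norm_nonneg _) _) hi).mp h.symm] with x hx
  exact norm_eq_zero.mp ((Real.rpow_eq_zero (norm_nonneg _) hq.ne').mp hx)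

theorem stmt_2_general (d : ℕ) (hd : 2 ≤ d) (p ω : ℝ) (hp : 1 + 4 / (d : ℝ) < p)
    (hp2 : d = 2 ∨ p < ((d : ℝ) + 2) / ((d : ℝ) - 2))
    (u : EuclideanSpace ℝ (Fin d) → ℂ)
    (hmem : MemLp u 2 volume)
    (hK : Integrable (fun x => ‖fderiv ℝ u x‖ ^ 2) volume)
    (hB : Integrable (fun x => ‖u x‖ ^ ((2 : ℝ) + 4 / (d : ℝ))) volume)
    (hne : ¬ (u =ᵐ[volume] 0))
    (poho1 : ∫ x, ((2 * (d : ℝ) / (p + 1) + 2 - (d : ℝ)) * ‖fderiv ℝ u x‖ ^ 2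
        + ((d : ℝ) / (1 + 2 / (d : ℝ)) - 2 * (d : ℝ) / (p + 1)) * ‖u x‖ ^ ((2 : ℝ) + 4 / (d : ℝ))
        + (2 * (d : ℝ) / (p + 1) - (d : ℝ)) * ω * ‖u x‖ ^ 2) = 0) :
    0 < ω := by
  have hd2 : (2 : ℝ) ≤ d := by exact_mod_cast hd
  have hd0 : (0 : ℝ) < d := by linarith
  have hp1 : 1 < p := by linarith [div_pos four_pos hd0]
  have hM : Integrable (fun x => ‖u x‖ ^ 2) := (memLp_two_iff_integrable_sq_norm hmem.1).mp hmem
  rw [integral_add ?_ (hM.const_mul _), integral_add (hK.const_mul _) (hB.const_mul _),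
    integral_const_mul, integral_const_mul, integral_const_mul] at poho1
  swap
  · exact (hK.const_mul _).add (hB.const_mul _)
  have hsub := mul_sub_two_lt_add_two hd2 (hp2.imp_left fun h => by exact_mod_cast h)
  exact pos_of_pohozaev_identity (gradient_coeff_pos (by linarith) hsub).le
    (mass_critical_coeff_pos hd0 hp) (mass_coeff_neg hd0 hp1)
    (integral_nonneg fun _ => sq_nonneg _) (integral_norm_rpow_pos (by positivity) hB hne)
    (integral_nonneg fun _ => sq_nonneg _) poho1

/-- A nontrivial `H¹` solution of `Δu + |u|^{4/d}u − |u|^{p−1}u − ωu = 0` satisfying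
the two Pohozaev-type identities has `ω > 0`. -/
theorem stmt_2 (d : ℕ) (hd : 2 ≤ d) (p ω : ℝ) (hp : 1 + 4 / (d : ℝ) < p)
    (hp2 : d = 2 ∨ p < ((d : ℝ) + 2) / ((d : ℝ) - 2))
    (u : EuclideanSpace ℝ (Fin d) → ℂ)
    (hmem : MemLp u 2 volume)
    (hK : Integrable (fun x => ‖fderiv ℝ u x‖ ^ 2) volume)
    (hB : Integrable (fun x => ‖u x‖ ^ ((2 : ℝ) + 4 / (d : ℝ))) volume)
    (hP : Integrable (fun x => ‖u x‖ ^ (p + 1)) volume)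
    (hne : ¬ (u =ᵐ[volume] 0))
    (hsol : ∀ x, lapC u x + (‖u x‖ ^ ((4 : ℝ) / (d : ℝ)) : ℝ) • u x
        - (‖u x‖ ^ (p - 1) : ℝ) • u x - (ω : ℂ) * u x = 0)
    (poho1 : ∫ x, ((2 * (d : ℝ) / (p + 1) + 2 - (d : ℝ)) * ‖fderiv ℝ u x‖ ^ 2
        + ((d : ℝ) / (1 + 2 / (d : ℝ)) - 2 * (d : ℝ) / (p + 1)) * ‖u x‖ ^ ((2 : ℝ) + 4 / (d : ℝ))
        + (2 * (d : ℝ) / (p + 1) - (d : ℝ)) * ω * ‖u x‖ ^ 2) = 0)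
    (poho2 : 2 * (∫ x, ‖fderiv ℝ u x‖ ^ 2)
        - (2 * (d : ℝ) / ((d : ℝ) + 2)) * (∫ x, ‖u x‖ ^ ((2 : ℝ) + 4 / (d : ℝ)))
        + ((p - 1) * (d : ℝ) / (p + 1)) * (∫ x, ‖u x‖ ^ (p + 1)) = 0) :
    0 < ω :=
  stmt_2_general d hd p ω hp hp2 u hmem hK hB hne poho1
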